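/- The finite form of the quintuple product identity is the M \to \infty limit of the terminating q-Dixon formula: for fixed natural number m and complex q, x with |q| < 1 (and denominators nonzero), letting M \to \infty in the q-Dixon identity for the sum \sum_{k=0}^m \frac{(x^2;q)_k(-qx;q)_k(q^{-m};q)_k(M;q)_k}{(q;q)_k(-x;q)_k(q^{1+m}x^2;q)_k(qx^2/M;q)_k}(q^{1+m}x/M)^k yields 1 = \sum_{k=0}^m (1+xq^k)\binom{m}{k}_q \frac{(x;q)_{m+1}}{(q^k x^2;q)_{m+1}} x^k q^{k^2}. -/

import Mathlib

open Filter

/-- The q-shifted factorial `(a;q)_n = ∏_{j=0}^{n-1} (1 - a q^j)`. -/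
noncomputable def qPoch (a q : ℂ) (n : ℕ) : ℂ :=
  ∏ j ∈ Finset.range n, (1 - a * q ^ j)

/-- The Gaussian binomial coefficient `(q;q)_m / ((q;q)_k (q;q)_{m-k})`. -/
noncomputable def qBinom (q : ℂ) (m k : ℕ) : ℂ :=
  qPoch q q m / (qPoch q q k * qPoch q q (m - k))

lemma qPoch_succ (a q : ℂ) (n : ℕ) : qPoch a q (n+1) = qPoch a q n * (1 - a * q ^ n) :=
  Finset.prod_range_succ _ n
lemma qPoch_zero (a q : ℂ) : qPoch a q 0 = 1 := rfl
lemma qPoch_add (a q : ℂ) (s t : ℕ) :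
    qPoch a q (s+t) = qPoch a q s * qPoch (a * q ^ s) q t := by
  unfold qPoch
  rw [Finset.prod_range_add]
  congr 1
  refine Finset.prod_congr rfl fun j _ => ?_
  rw [pow_add]; ring
lemma one_sub_pow_ne (q : ℂ) (hq1 : ‖q‖ < 1) (n : ℕ) (hn : n ≠ 0) : 1 - q ^ n ≠ 0 := by
  intro h
  have h1 : q ^ n = 1 := by linear_combination -h
  have h2 : ‖q‖ ^ n < 1 := pow_lt_one₀ (norm_nonneg q) hq1 hn
  rw [← norm_pow, h1, norm_one] at h2
  linarith
lemma qPoch_q_ne (q : ℂ) (hq1 : ‖q‖ < 1) (n : ℕ) : qPoch q q n ≠ 0 := by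
  unfold qPoch
  refine Finset.prod_ne_zero_iff.mpr fun j _ => ?_
  have h := one_sub_pow_ne q hq1 (j+1) (by omega)
  intro hc; apply h
  rw [pow_succ']; exact hc
lemma qPoch_x2_ne (q x : ℂ) (hx2 : ∀ j : ℕ, 1 - x ^ 2 * q ^ j ≠ 0) (n : ℕ) :
    qPoch (x^2) q n ≠ 0 :=
  Finset.prod_ne_zero_iff.mpr fun j _ => hx2 j
lemma one_sub_x_ne (q x : ℂ) (hx2 : ∀ j : ℕ, 1 - x ^ 2 * q ^ j ≠ 0) (j : ℕ) :
    1 - x * q ^ j ≠ 0 := by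
  intro h
  apply hx2 (2*j)
  have h1 : x * q ^ j = 1 := by linear_combination -h
  have h2 : x ^ 2 * q ^ (2*j) = (x * q ^ j)^2 := by
    rw [mul_pow, ← pow_mul, mul_comm j 2]
  rw [h2, h1]; ring
lemma qPoch_x_ne (q x : ℂ) (hx2 : ∀ j : ℕ, 1 - x ^ 2 * q ^ j ≠ 0) (n : ℕ) :
    qPoch x q n ≠ 0 :=
  Finset.prod_ne_zero_iff.mpr fun j _ => one_sub_x_ne q x hx2 j
lemma qPoch_x2_shift (q x : ℂ) (hx2 : ∀ j : ℕ, 1 - x ^ 2 * q ^ j ≠ 0) (k n : ℕ) :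
    qPoch (q^k * x^2) q n = qPoch (x^2) q (k+n) / qPoch (x^2) q k := by
  rw [eq_div_iff (qPoch_x2_ne q x hx2 k), qPoch_add, mul_comm (x^2) (q^k)]
  ring

noncomputable def Tt (q x : ℂ) (m k : ℕ) : ℂ :=
  (1 + x * q ^ k) * qBinom q m k *
    (qPoch x q (m + 1) / qPoch (q ^ k * x ^ 2) q (m + 1)) * x ^ k * q ^ (k ^ 2)
noncomputable def Gg (q x : ℂ) (m k : ℕ) : ℂ :=
  qBinom q m k * (qPoch x q (m + 1) / qPoch (q ^ k * x ^ 2) q (m + 1)) * x ^ k * q ^ (k ^ 2)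
    * (q ^ (m+1) * (q ^ k - 1) / (q ^ k - q ^ (m+1)))

set_option maxHeartbeats 4000000 in
lemma lemA (q x : ℂ) (hq0 : q ≠ 0) (hq1 : ‖q‖ < 1) (hx0 : x ≠ 0)
    (hx2 : ∀ j : ℕ, 1 - x ^ 2 * q ^ j ≠ 0) (k d : ℕ) :
    Tt q x (k+d+2) k - Tt q x (k+d+1) k = Gg q x (k+d+1) (k+1) - Gg q x (k+d+1) k := by
  have hK := qPoch_q_ne q hq1 k
  have hU := qPoch_q_ne q hq1 d
  have hM0 := qPoch_q_ne q hq1 (k+d+1)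
  have hPx := qPoch_x_ne q x hx2 (k+d+1+1)
  have hWk := qPoch_x2_ne q x hx2 k
  have hWb := qPoch_x2_ne q x hx2 (k+(k+d+2))
  simp only [Tt, Gg, qBinom,
    show k+d+2-k = d+2 from by omega, show k+d+1-k = d+1 from by omega,
    show k+d+1-(k+1) = d from by omega,
    show k+d+2+1 = (k+d+1)+1+1 from by omega, show k+d+2 = (k+d+1)+1 from by omega,
    show d+2 = (d+1)+1 from rfl]
  rw [qPoch_succ q q (k+d+1), qPoch_succ q q (d+1), qPoch_succ q q d, qPoch_succ q q k,
    qPoch_succ x q (k+d+1+1), qPoch_x2_shift q x hx2 k (k+d+1+1+1),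
    qPoch_x2_shift q x hx2 k (k+d+1+1), qPoch_x2_shift q x hx2 (k+1) (k+d+1+1)]
  rw [show k+(k+d+1+1+1) = (k+(k+d+2))+1 from by omega,
    show k+1+(k+d+1+1) = (k+(k+d+2))+1 from by omega,
    show k+(k+d+1+1) = k+(k+d+2) from by omega,
    qPoch_succ (x^2) q (k+(k+d+2)), qPoch_succ (x^2) q k]
  rw [show (k+1)^2 = k^2+(k+k+1) from by ring]
  rw [div_div_eq_mul_div, div_div_eq_mul_div, div_div_eq_mul_div]
  have p1 : q ^ (k+d+1) = q^k * q^d * q := by ring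
  have p2 : q ^ (k+d+1+1) = q^k * q^d * q * q := by ring
  have p3 : q ^ (k+(k+d+2)) = q^k * q^k * q^d * q * q := by ring
  have p4 : q ^ (k^2+(k+k+1)) = q^(k^2) * q^k * q^k * q := by ring
  have p5 : q ^ (d+1) = q^d * q := by ring
  have p6 : (x:ℂ) ^ (k+1) = x^k * x := by ring
  have p7 : q ^ (k+1) = q^k * q := by ring
  rw [p4, p6, p2, p3, p1, p5, p7]
  have hA : q^k ≠ 0 := pow_ne_zero _ hq0
  have hu : q^d ≠ 0 := pow_ne_zero _ hq0
  have hX : x^k ≠ 0 := pow_ne_zero _ hx0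
  have hQ : q^(k^2) ≠ 0 := pow_ne_zero _ hq0
  have h1 : (1:ℂ) - q * (q^d) ≠ 0 := by
    have h := one_sub_pow_ne q hq1 (d+1) (by omega)
    intro hc; apply h; rw [pow_succ']; linear_combination hc
  have h2 : (1:ℂ) - q * (q^d * q) ≠ 0 := by
    have h := one_sub_pow_ne q hq1 (d+2) (by omega)
    intro hc; apply h
    have e : q^(d+2) = q*(q^d*q) := by ring
    rw [e]; linear_combination hc
  have h3 : (1:ℂ) - q * q^k ≠ 0 := by
    have h := one_sub_pow_ne q hq1 (k+1) (by omega)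
    intro hc; apply h
    have e : q^(k+1) = q*q^k := by ring
    rw [e]; linear_combination hc
  have h4 : (1:ℂ) - x^2 * q^k ≠ 0 := hx2 k
  have h5 : (1:ℂ) - x^2 * (q^k*q^k*q^d*q*q) ≠ 0 := by
    have h := hx2 (k+(k+d+2))
    intro hc; apply h
    rw [p3]; linear_combination hc
  have h6 : q^k - q^k*q^d*q*q ≠ 0 := by
    have e : q^k - q^k*q^d*q*q = q^k * (1 - q*(q^d*q)) := by ring
    rw [e]; exact mul_ne_zero hA h2
  have h7 : q^k*q - q^k*q^d*q*q ≠ 0 := by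
    have e : q^k*q - q^k*q^d*q*q = (q^k*q) * (1 - q*q^d) := by ring
    rw [e]; exact mul_ne_zero (mul_ne_zero hA hq0) h1
  revert h1 h2 h3 h4 h5 h6 h7 hA hu hX hQ hK hU hM0 hPx hWk hWb
  generalize qPoch q q (k+d+1) = M0
  generalize qPoch x q (k+d+1+1) = Px
  generalize qPoch (x^2) q (k+(k+d+2)) = Wb
  generalize qPoch (x^2) q k = Wk
  generalize qPoch q q k = K
  generalize qPoch q q d = U
  generalize q^(k^2) = Q
  generalize x^k = X
  generalize q^k = A
  generalize q^d = u
  intro h1 h2 h3 h4 h5 h6 h7 hA hu hX hQ hK hU hM0 hPx hWk hWb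
  have hD : K * U * Wb * A * q * (1-q*u) * (1-q*(u*q)) * (1-q*A) * (1-x^2*A) *
      (1-x^2*(A*A*u*q*q)) ≠ 0 := by
    repeat' first | apply mul_ne_zero | assumption
  have c1a : (K * (U * (1 - q*u) * (1 - q*(u*q)))) * (K * (U * (1 - q*u) * (1 - q*(u*q))))⁻¹ = 1 :=
    mul_inv_cancel₀ (by repeat' first | apply mul_ne_zero | assumption)
  have c1b : (Wb * (1 - x^2*(A*A*u*q*q))) * (Wb * (1 - x^2*(A*A*u*q*q)))⁻¹ = 1 :=
    mul_inv_cancel₀ (by repeat' first | apply mul_ne_zero | assumption)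
  have c0a : (K * (U * (1 - q*u))) * (K * (U * (1 - q*u)))⁻¹ = 1 :=
    mul_inv_cancel₀ (by repeat' first | apply mul_ne_zero | assumption)
  have c0b : Wb * Wb⁻¹ = 1 := mul_inv_cancel₀ h6
  have c2a : (K * (1 - q*A) * U) * (K * (1 - q*A) * U)⁻¹ = 1 :=
    mul_inv_cancel₀ (by repeat' first | apply mul_ne_zero | assumption)
  have c2c : (A*q - A*u*q*q) * (A*q - A*u*q*q)⁻¹ = 1 := mul_inv_cancel₀ hWb
  have c3c : (A - A*u*q*q) * (A - A*u*q*q)⁻¹ = 1 := mul_inv_cancel₀ hWk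
  have e1 : (1 + x * A) * (M0 * (1 - q * (A * u * q)) / (K * (U * (1 - q * u) * (1 - q * (u * q))))) *
        (Px * (1 - x * (A * u * q * q)) * Wk / (Wb * (1 - x ^ 2 * (A * A * u * q * q)))) * X * Q
      = ((1 + x*A) * M0 * (1 - q*(A*u*q)) * Px * (1 - x*(A*u*q*q)) * Wk * X * Q *
          (A*q*(1-q*A)*(1-x^2*A))) /
        (K * U * Wb * A * q * (1-q*u) * (1-q*(u*q)) * (1-q*A) * (1-x^2*A) * (1-x^2*(A*A*u*q*q))) := by
    rw [eq_div_iff hD]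
    linear_combination (((1 + x*A) * M0 * (1 - q*(A*u*q)) * Px * (1 - x*(A*u*q*q)) * Wk * X * Q *
      (A*q*(1-q*A)*(1-x^2*A))) * ((K * (U * (1 - q*u) * (1 - q*(u*q)))) *
      (K * (U * (1 - q*u) * (1 - q*(u*q))))⁻¹)) * c1b +
      ((1 + x*A) * M0 * (1 - q*(A*u*q)) * Px * (1 - x*(A*u*q*q)) * Wk * X * Q *
      (A*q*(1-q*A)*(1-x^2*A))) * c1a
  have e0 : (1 + x * A) * (M0 / (K * (U * (1 - q * u)))) * (Px * Wk / Wb) * X * Q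
      = ((1+x*A)*M0*Px*Wk*X*Q*(A*q*(1-q*(u*q))*(1-q*A)*(1-x^2*A)*(1-x^2*(A*A*u*q*q)))) /
        (K * U * Wb * A * q * (1-q*u) * (1-q*(u*q)) * (1-q*A) * (1-x^2*A) * (1-x^2*(A*A*u*q*q))) := by
    rw [eq_div_iff hD]
    linear_combination (((1+x*A)*M0*Px*Wk*X*Q*(A*q*(1-q*(u*q))*(1-q*A)*(1-x^2*A)*(1-x^2*(A*A*u*q*q)))) *
      ((K * (U * (1 - q*u))) * (K * (U * (1 - q*u)))⁻¹)) * c0b +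
      ((1+x*A)*M0*Px*Wk*X*Q*(A*q*(1-q*(u*q))*(1-q*A)*(1-x^2*A)*(1-x^2*(A*A*u*q*q)))) * c0a
  have e2 : M0 / (K * (1 - q * A) * U) *
        (Px * (Wk * (1 - x ^ 2 * A)) / (Wb * (1 - x ^ 2 * (A * A * u * q * q)))) * (X * x) *
        (Q * A * A * q) * (A * u * q * q * (A * q - 1) / (A * q - A * u * q * q))
      = (M0*Px*Wk*(1-x^2*A)*X*x*Q*A*A*q*(A*u*q*q)*(A*q-1)*((1-q*(u*q))*(1-x^2*A))) /
        (K * U * Wb * A * q * (1-q*u) * (1-q*(u*q)) * (1-q*A) * (1-x^2*A) * (1-x^2*(A*A*u*q*q))) := by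
    rw [eq_div_iff hD]
    linear_combination ((M0*Px*Wk*(1-x^2*A)*X*x*Q*A*A*q*(A*u*q*q)*(A*q-1)*((1-q*(u*q))*(1-x^2*A))) *
      ((K * (1 - q*A) * U) * (K * (1 - q*A) * U)⁻¹) *
      ((Wb * (1 - x^2*(A*A*u*q*q))) * (Wb * (1 - x^2*(A*A*u*q*q)))⁻¹)) * c2c +
      ((M0*Px*Wk*(1-x^2*A)*X*x*Q*A*A*q*(A*u*q*q)*(A*q-1)*((1-q*(u*q))*(1-x^2*A))) *
      ((K * (1 - q*A) * U) * (K * (1 - q*A) * U)⁻¹)) * c1b +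
      (M0*Px*Wk*(1-x^2*A)*X*x*Q*A*A*q*(A*u*q*q)*(A*q-1)*((1-q*(u*q))*(1-x^2*A))) * c2a
  have e3 : M0 / (K * (U * (1 - q * u))) * (Px * Wk / Wb) * X * Q *
        (A * u * q * q * (A - 1) / (A - A * u * q * q))
      = (M0*Px*Wk*X*Q*(A*u*q*q)*(A-1)*(q*(1-q*A)*(1-x^2*A)*(1-x^2*(A*A*u*q*q)))) /
        (K * U * Wb * A * q * (1-q*u) * (1-q*(u*q)) * (1-q*A) * (1-x^2*A) * (1-x^2*(A*A*u*q*q))) := by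
    rw [eq_div_iff hD]
    linear_combination ((M0*Px*Wk*X*Q*(A*u*q*q)*(A-1)*(q*(1-q*A)*(1-x^2*A)*(1-x^2*(A*A*u*q*q)))) *
      ((K * (U * (1 - q*u))) * (K * (U * (1 - q*u)))⁻¹) * (Wb * Wb⁻¹)) * c3c +
      ((M0*Px*Wk*X*Q*(A*u*q*q)*(A-1)*(q*(1-q*A)*(1-x^2*A)*(1-x^2*(A*A*u*q*q)))) *
      ((K * (U * (1 - q*u))) * (K * (U * (1 - q*u)))⁻¹)) * c0b +
      (M0*Px*Wk*X*Q*(A*u*q*q)*(A-1)*(q*(1-q*A)*(1-x^2*A)*(1-x^2*(A*A*u*q*q)))) * c0a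
  rw [e1, e0, e2, e3, div_sub_div_same, div_sub_div_same]
  congr 1
  ring

set_option maxHeartbeats 2000000 in
lemma lemB (q x : ℂ) (hq0 : q ≠ 0) (hq1 : ‖q‖ < 1) (hx0 : x ≠ 0)
    (hx2 : ∀ j : ℕ, 1 - x ^ 2 * q ^ j ≠ 0) (m : ℕ) :
    Gg q x m m + (Tt q x (m+1) m - Tt q x m m) + Tt q x (m+1) (m+1) = 0 := by
  have hone : qPoch q q 1 = 1 - q := by simp [qPoch]
  simp only [Tt, Gg, qBinom, show m+1-m = 1 from by omega, show m-m = 0 from by omega,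
    show m+1-(m+1) = 0 from by omega, qPoch_zero, mul_one, hone]
  rw [show m+1+1 = (m+1)+1 from rfl]
  rw [qPoch_succ q q m, qPoch_succ x q (m+1),
    qPoch_x2_shift q x hx2 m ((m+1)+1), qPoch_x2_shift q x hx2 (m+1) ((m+1)+1),
    qPoch_x2_shift q x hx2 m (m+1)]
  rw [show m+((m+1)+1) = (m+(m+1))+1 from by omega,
    show (m+1)+((m+1)+1) = ((m+(m+1))+1)+1 from by omega,
    qPoch_succ (x^2) q ((m+(m+1))+1), qPoch_succ (x^2) q (m+(m+1)), qPoch_succ (x^2) q m]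
  rw [show (m+1)^2 = m^2+(m+m+1) from by ring]
  rw [div_div_eq_mul_div, div_div_eq_mul_div, div_div_eq_mul_div]
  have pp1 : q ^ (m+1) = q^m * q := by ring
  have pp2 : q ^ (m+(m+1)) = q^m * q^m * q := by ring
  have pp3 : q ^ ((m+(m+1))+1) = q^m * q^m * q * q := by ring
  have pp4 : q ^ (m^2+(m+m+1)) = q^(m^2) * q^m * q^m * q := by ring
  have pp5 : (x:ℂ) ^ (m+1) = x^m * x := by ring
  rw [pp4, pp5, pp3, pp2, pp1]
  have hP := qPoch_q_ne q hq1 m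
  have hWb := qPoch_x2_ne q x hx2 (m+(m+1))
  have hA : q^m ≠ 0 := pow_ne_zero _ hq0
  have n1 : (1:ℂ) - q ≠ 0 := by
    have h := one_sub_pow_ne q hq1 1 (by omega)
    simpa using h
  have n2 : (1:ℂ) - q * q^m ≠ 0 := by
    have h := one_sub_pow_ne q hq1 (m+1) (by omega)
    intro hc; apply h
    have e : q^(m+1) = q*q^m := by ring
    rw [e]; linear_combination hc
  have n3 : (1:ℂ) - x^2 * (q^m*q^m*q) ≠ 0 := by
    have h := hx2 (m+(m+1))
    intro hc; apply h; rw [pp2]; linear_combination hc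
  have n4 : (1:ℂ) - x^2 * (q^m*q^m*q*q) ≠ 0 := by
    have h := hx2 ((m+(m+1))+1)
    intro hc; apply h; rw [pp3]; linear_combination hc
  have n5 : q^m - q^m*q ≠ 0 := by
    have e : q^m - q^m*q = q^m * (1-q) := by ring
    rw [e]; exact mul_ne_zero hA n1
  revert hP hWb hA n1 n2 n3 n4 n5
  generalize qPoch q q m = P
  generalize qPoch x q (m+1) = Px
  generalize qPoch (x^2) q (m+(m+1)) = Wb
  generalize qPoch (x^2) q m = Wm
  generalize q^(m^2) = Q
  generalize x^m = X
  generalize q^m = A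
  intro hP hWb hA n1 n2 n3 n4 n5
  have hD : P * Wb * A * (1-q) * (1-q*A) * (1-x^2*(A*A*q)) * (1-x^2*(A*A*q*q)) ≠ 0 := by
    repeat' first | apply mul_ne_zero | assumption
  have cP : P * P⁻¹ = 1 := mul_inv_cancel₀ hP
  have cWb : Wb * Wb⁻¹ = 1 := mul_inv_cancel₀ hWb
  have cg3 : (A - A*q) * (A - A*q)⁻¹ = 1 := mul_inv_cancel₀ n5
  have ca1 : (P*(1-q)) * (P*(1-q))⁻¹ = 1 :=
    mul_inv_cancel₀ (by repeat' first | apply mul_ne_zero | assumption)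
  have ca2 : (Wb*(1-x^2*(A*A*q))) * (Wb*(1-x^2*(A*A*q)))⁻¹ = 1 :=
    mul_inv_cancel₀ (by repeat' first | apply mul_ne_zero | assumption)
  have cc1 : (P*(1-q*A)) * (P*(1-q*A))⁻¹ = 1 :=
    mul_inv_cancel₀ (by repeat' first | apply mul_ne_zero | assumption)
  have cc2 : (Wb*(1-x^2*(A*A*q))*(1-x^2*(A*A*q*q))) * (Wb*(1-x^2*(A*A*q))*(1-x^2*(A*A*q*q)))⁻¹ = 1 :=
    mul_inv_cancel₀ (by repeat' first | apply mul_ne_zero | assumption)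
  have eg : P / P * (Px * Wm / Wb) * X * Q * (A * q * (A - 1) / (A - A * q))
      = (P*Px*Wm*X*Q*(A*q)*(A-1)*((1-q*A)*(1-x^2*(A*A*q))*(1-x^2*(A*A*q*q)))) /
        (P * Wb * A * (1-q) * (1-q*A) * (1-x^2*(A*A*q)) * (1-x^2*(A*A*q*q))) := by
    rw [eq_div_iff hD]
    linear_combination ((P*Px*Wm*X*Q*(A*q)*(A-1)*((1-q*A)*(1-x^2*(A*A*q))*(1-x^2*(A*A*q*q)))) *
        (P*P⁻¹) * (Wb*Wb⁻¹)) * cg3 +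
      ((P*Px*Wm*X*Q*(A*q)*(A-1)*((1-q*A)*(1-x^2*(A*A*q))*(1-x^2*(A*A*q*q)))) * (P*P⁻¹)) * cWb +
      (P*Px*Wm*X*Q*(A*q)*(A-1)*((1-q*A)*(1-x^2*(A*A*q))*(1-x^2*(A*A*q*q)))) * cP
  have ea : (1 + x * A) * (P * (1 - q * A) / (P * (1 - q))) *
        (Px * (1 - x * (A * q)) * Wm / (Wb * (1 - x ^ 2 * (A * A * q)))) * X * Q
      = ((1+x*A)*(P*(1-q*A))*(Px*(1-x*(A*q))*Wm)*X*Q*(A*(1-q*A)*(1-x^2*(A*A*q*q)))) /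
        (P * Wb * A * (1-q) * (1-q*A) * (1-x^2*(A*A*q)) * (1-x^2*(A*A*q*q))) := by
    rw [eq_div_iff hD]
    linear_combination (((1+x*A)*(P*(1-q*A))*(Px*(1-x*(A*q))*Wm)*X*Q*(A*(1-q*A)*(1-x^2*(A*A*q*q)))) *
        ((P*(1-q))*(P*(1-q))⁻¹)) * ca2 +
      ((1+x*A)*(P*(1-q*A))*(Px*(1-x*(A*q))*Wm)*X*Q*(A*(1-q*A)*(1-x^2*(A*A*q*q)))) * ca1
  have eb : (1 + x * A) * (P / P) * (Px * Wm / Wb) * X * Q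
      = ((1+x*A)*P*(Px*Wm)*X*Q*(A*(1-q)*(1-q*A)*(1-x^2*(A*A*q))*(1-x^2*(A*A*q*q)))) /
        (P * Wb * A * (1-q) * (1-q*A) * (1-x^2*(A*A*q)) * (1-x^2*(A*A*q*q))) := by
    rw [eq_div_iff hD]
    linear_combination (((1+x*A)*P*(Px*Wm)*X*Q*(A*(1-q)*(1-q*A)*(1-x^2*(A*A*q))*(1-x^2*(A*A*q*q)))) *
        (P*P⁻¹)) * cWb +
      ((1+x*A)*P*(Px*Wm)*X*Q*(A*(1-q)*(1-q*A)*(1-x^2*(A*A*q))*(1-x^2*(A*A*q*q)))) * cP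
  have ec : (1 + x * (A * q)) * (P * (1 - q * A) / (P * (1 - q * A))) *
        (Px * (1 - x * (A * q)) * (Wm * (1 - x ^ 2 * A)) /
          (Wb * (1 - x ^ 2 * (A * A * q)) * (1 - x ^ 2 * (A * A * q * q)))) * (X * x) * (Q * A * A * q)
      = ((1+x*(A*q))*(P*(1-q*A))*(Px*(1-x*(A*q))*(Wm*(1-x^2*A)))*(X*x)*(Q*A*A*q)*(A*(1-q))) /
        (P * Wb * A * (1-q) * (1-q*A) * (1-x^2*(A*A*q)) * (1-x^2*(A*A*q*q))) := by
    rw [eq_div_iff hD]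
    linear_combination (((1+x*(A*q))*(P*(1-q*A))*(Px*(1-x*(A*q))*(Wm*(1-x^2*A)))*(X*x)*(Q*A*A*q)*(A*(1-q))) *
        ((P*(1-q*A))*(P*(1-q*A))⁻¹)) * cc2 +
      ((1+x*(A*q))*(P*(1-q*A))*(Px*(1-x*(A*q))*(Wm*(1-x^2*A)))*(X*x)*(Q*A*A*q)*(A*(1-q))) * cc1
  rw [eg, ea, eb, ec, div_sub_div_same, ← add_div, ← add_div, div_eq_zero_iff]
  left
  ring


lemma Gg_zero (q x : ℂ) (m : ℕ) : Gg q x m 0 = 0 := by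
  simp [Gg]

lemma sum_Tt (q x : ℂ) (hq0 : q ≠ 0) (hq1 : ‖q‖ < 1) (hx0 : x ≠ 0)
    (hx2 : ∀ j : ℕ, 1 - x ^ 2 * q ^ j ≠ 0) :
    ∀ m : ℕ, ∑ k ∈ Finset.range (m+1), Tt q x m k = 1 := by
  intro m
  induction m with
  | zero =>
    rw [Finset.sum_range_one]
    have h0 : (1:ℂ) - x ^ 2 ≠ 0 := by simpa using hx2 0
    simp only [Tt, qBinom, qPoch, Nat.sub_self, zero_add, Finset.range_zero, Finset.range_one,
      Finset.prod_empty, Finset.prod_singleton, pow_zero, mul_one, one_mul]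
    norm_num
    rw [div_eq_mul_inv]
    linear_combination (1:ℂ) * mul_inv_cancel₀ h0
  | succ m ih =>
    rw [Finset.sum_range_succ, Finset.sum_range_succ]
    have hstep : ∀ k ∈ Finset.range m,
        Tt q x (m+1) k = Tt q x m k + (Gg q x m (k+1) - Gg q x m k) := by
      intro k hk
      have hk' := Finset.mem_range.mp hk
      obtain ⟨d, rfl⟩ : ∃ d, m = k + d + 1 := ⟨m - k - 1, by omega⟩
      have h := lemA q x hq0 hq1 hx0 hx2 k d
      simp only [show k+d+1+1 = k+d+2 from rfl]
      linear_combination h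
    rw [Finset.sum_congr rfl hstep, Finset.sum_add_distrib,
      Finset.sum_range_sub (fun i => Gg q x m i), Gg_zero]
    rw [Finset.sum_range_succ] at ih
    have hB := lemB q x hq0 hq1 hx0 hx2 m
    linear_combination ih + hB

/-- The finite form of the quintuple product identity as the `M → ∞` limit of the
terminating q-Dixon formula: each term of the q-Dixon sum converges as `M → ∞`
(to the corresponding term with `(M;q)_k (q^{1+m}x/M)^k → (-1)^k q^{binom(k,2)} (q^{1+m}x)^k`
and `(qx^2/M;q)_k → 1`), and in the limit one obtains
`1 = ∑_{k=0}^m (1+xq^k) binom(m,k)_q (x;q)_{m+1}/(q^k x^2;q)_{m+1} x^k q^{k^2}`. -/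
theorem finite_quintuple_as_q_dixon_limit (q x : ℂ) (m : ℕ)
    (hq0 : q ≠ 0) (hq1 : ‖q‖ < 1) (hx0 : x ≠ 0)
    (hnegx : ∀ j : ℕ, 1 + x * q ^ j ≠ 0)
    (hx2 : ∀ j : ℕ, 1 - x ^ 2 * q ^ j ≠ 0) :
    (∀ k : ℕ, k ≤ m →
      Tendsto (fun M : ℂ =>
          (qPoch (x ^ 2) q k * qPoch (-(q * x)) q k * qPoch (q ^ (-(m : ℤ))) q k *
              qPoch M q k) /
            (qPoch q q k * qPoch (-x) q k * qPoch (q ^ (1 + m) * x ^ 2) q k *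
              qPoch (q * x ^ 2 / M) q k) *
            (q ^ (1 + m) * x / M) ^ k)
        (Filter.cocompact ℂ)
        (nhds ((qPoch (x ^ 2) q k * qPoch (-(q * x)) q k * qPoch (q ^ (-(m : ℤ))) q k) /
            (qPoch q q k * qPoch (-x) q k * qPoch (q ^ (1 + m) * x ^ 2) q k) *
            ((-1 : ℂ) ^ k * q ^ (k * (k - 1) / 2) * (q ^ (1 + m) * x) ^ k))))
    ∧ 1 = ∑ k ∈ Finset.range (m + 1),
        (1 + x * q ^ k) * qBinom q m k *
          (qPoch x q (m + 1) / qPoch (q ^ k * x ^ 2) q (m + 1)) * x ^ k * q ^ (k ^ 2) := by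
  constructor
  · intro k _
    set N := qPoch (x ^ 2) q k * qPoch (-(q * x)) q k * qPoch (q ^ (-(m : ℤ))) q k with hN
    set D := qPoch q q k * qPoch (-x) q k * qPoch (q ^ (1 + m) * x ^ 2) q k with hDdef
    have hD : D ≠ 0 := by
      refine mul_ne_zero (mul_ne_zero (qPoch_q_ne q hq1 k) ?_) ?_
      · refine Finset.prod_ne_zero_iff.mpr fun j _ => ?_
        intro hc; exact hnegx j (by linear_combination hc)
      · refine Finset.prod_ne_zero_iff.mpr fun j _ => ?_
        intro hc; apply hx2 (1+m+j)
        rw [pow_add]; linear_combination hc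
    have h0 : Tendsto (fun M : ℂ => M⁻¹) (cocompact ℂ) (nhds 0) := by
      have h := tendsto_inv₀_cobounded (α := ℂ)
      rwa [Metric.cobounded_eq_cocompact] at h
    set g : ℂ → ℂ := fun t =>
      N / (D * ∏ j ∈ Finset.range k, (1 - q * x ^ 2 * t * q ^ j)) *
        ((q ^ (1 + m) * x) ^ k * ∏ j ∈ Finset.range k, (t - q ^ j)) with hg
    have hgC : ContinuousAt g 0 := by
      apply ContinuousAt.mul
      · apply ContinuousAt.div continuousAt_const
        · exact (continuous_const.mul
            (continuous_finset_prod _ fun j _ => by continuity)).continuousAt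
        · simpa using hD
      · exact (continuous_const.mul
          (continuous_finset_prod _ fun j _ => by continuity)).continuousAt
    have hcomp : Tendsto (fun M : ℂ => g M⁻¹) (cocompact ℂ) (nhds (g 0)) :=
      hgC.tendsto.comp h0
    have hg0 : g 0 = N / D * ((-1 : ℂ) ^ k * q ^ (k * (k - 1) / 2) * (q ^ (1 + m) * x) ^ k) := by
      rw [hg]
      simp only [mul_zero, zero_mul, sub_zero, zero_sub, mul_one, Finset.prod_const_one]
      have hp : ∏ j ∈ Finset.range k, (-(q ^ j)) =
          (-1 : ℂ) ^ k * q ^ (k * (k - 1) / 2) := by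
        have e1 : ∀ j ∈ Finset.range k, (-(q ^ j) : ℂ) = (-1) * q ^ j := fun j _ => by ring
        rw [Finset.prod_congr rfl e1, Finset.prod_mul_distrib, Finset.prod_const,
          Finset.card_range, Finset.prod_pow_eq_pow_sum, Finset.sum_range_id]
      rw [hp]; ring
    rw [← hg0]
    apply hcomp.congr'
    have hne : ∀ᶠ M : ℂ in cocompact ℂ, M ≠ 0 := by
      have hmem : ({(0:ℂ)}ᶜ : Set ℂ) ∈ cocompact ℂ :=
        Filter.mem_cocompact.mpr ⟨{0}, isCompact_singleton, subset_rfl⟩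
      filter_upwards [hmem] with M hM using hM
    filter_upwards [hne] with M hM
    have key : (q ^ (1 + m) * x / M) ^ k * qPoch M q k =
        (q ^ (1 + m) * x) ^ k * ∏ j ∈ Finset.range k, (M⁻¹ - q ^ j) := by
      rw [div_pow, div_eq_mul_inv, ← inv_pow, qPoch, ← Finset.card_range k,
        ← Finset.prod_const (M⁻¹ : ℂ), Finset.card_range, mul_assoc,
        ← Finset.prod_mul_distrib]
      congr 1
      refine Finset.prod_congr rfl fun j _ => ?_
      field_simp
    have harg : q * x ^ 2 / M = q * x ^ 2 * M⁻¹ := div_eq_mul_inv _ _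
    rw [hg]
    simp only
    rw [harg]
    have hq2 : qPoch (q * x ^ 2 * M⁻¹) q k =
        ∏ j ∈ Finset.range k, (1 - q * x ^ 2 * M⁻¹ * q ^ j) := rfl
    rw [hq2]
    linear_combination (-(N * (D * ∏ j ∈ Finset.range k, (1 - q * x ^ 2 * M⁻¹ * q ^ j))⁻¹)) * key
  · have h := sum_Tt q x hq0 hq1 hx0 hx2 m
    simp only [Tt] at h
    exact h.symm
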